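/- arXiv:2401.04455 — 4 statements merged into one kernel-verified Lean document; each statement's English description precedes it below -/
import Mathlib

section
/- If the sequence (a_n) of partial quotients of α is unbounded, then there exists a sequence of positive integers t_n→+∞ such that t_n·X mod 1 converges in law to the Dirac mass at 0 on 𝕋; equivalently, for every positive integer m, P̂_X(m t_n)=∫_ℝ e^{2iπ m t_n x}dP_X(x) → 1 as n→∞. -/
/-!
Choose a convergent `p/q` of `α` followed by a huge partial quotient, so that the first `K = Lq`
multiples `kα` stay within `η = L/(Aq)` of the `kp/q`. Off a set of measure `O(KNη) = O(NL²/A)`,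
no point `x + kα` (`k < K`) is `η`-close to a discontinuity, so the `K`-th partial sum of `X`
coincides with that of the same series over the rotation by `p/q`; the latter is a step function
with at most `qN + 1` values. Dirichlet's simultaneous approximation gives `t ≤ D^(qN+1)` with
`t v` within `1/D` of an integer for all those values, while the tail after `K` terms is
`O(c^(Lq))` with `c = max r < 1`, which beats the factor `t` once `D^N c^L` is small. So `t X` is
`2ε`-close to an integer outside a set of measure `ε`, and then `P̂_X(m t) ≈ 1`.
-/

open MeasureTheory Filter Topology

/-- The random series `X(x) = ∑_{n≥0} r_n(x) b(x + nα)` above the rotation by `α`,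
where `r_n(x) = r(x) r(x+α) ⋯ r(x+(n−1)α)`; the circle is modelled as `ℝ` with
`1`-periodic data. -/
noncomputable def Xser (α : ℝ) (b r : ℝ → ℝ) (x : ℝ) : ℝ :=
  ∑' n : ℕ, (∏ k ∈ Finset.range n, r (x + k * α)) * b (x + n * α)

/-- The arc `[d_i, d_{i+1})` of the circle (cyclically: the last arc is `[d_{N-1}, d_0 + 1)`),
viewed in `ℝ`. -/
def arc {N : ℕ} [NeZero N] (d : Fin N → ℝ) (i : Fin N) : Set ℝ :=
  if (i : ℕ) + 1 = N then Set.Ico (d i) (d (i + 1) + 1) else Set.Ico (d i) (d (i + 1))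

/-- Iterates of the Gauss map `x ↦ {1/x}` starting from `α`. -/
noncomputable def gaussIter (α : ℝ) : ℕ → ℝ
  | 0 => α
  | n + 1 => Int.fract (1 / gaussIter α n)

/-- The `(n+1)`-st partial quotient `a_{n+1}` of the continued fraction expansion
`α = [0; a_1, a_2, …]`: `a_{n+1} = ⌊1 / G^n(α)⌋` where `G` is the Gauss map. -/
noncomputable def partQuot (α : ℝ) (n : ℕ) : ℕ := ⌊1 / gaussIter α n⌋₊

section ContinuedFraction

open GenContFract

open GenContFract (of)

variable {α : ℝ}

theorem gaussIter_mem_Ioo_and_irrational (hα : α ∈ Set.Ioo 0 1) (hirr : Irrational α) (n : ℕ) :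
    gaussIter α n ∈ Set.Ioo 0 1 ∧ Irrational (gaussIter α n) := by
  induction n with
  | zero => exact ⟨hα, hirr⟩
  | succ n ih =>
    have hfr : Irrational (gaussIter α (n + 1)) := by
      show Irrational (Int.fract _)
      rw [Int.fract, one_div]
      exact ih.2.inv.sub_intCast _
    exact ⟨⟨(Int.fract_nonneg _).lt_of_ne' hfr.ne_zero, Int.fract_lt_one _⟩, hfr⟩

theorem intFractPair_stream_eq_gaussIter (hα : α ∈ Set.Ioo 0 1) (hirr : Irrational α) (n : ℕ) :
    ∃ z : ℤ, IntFractPair.stream α n = some ⟨z, gaussIter α n⟩ := by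
  induction n with
  | zero =>
    refine ⟨0, ?_⟩
    rw [IntFractPair.stream_zero, IntFractPair.of, Int.floor_eq_zero_iff.2 ⟨hα.1.le, hα.2⟩,
      Int.fract_eq_self.2 ⟨hα.1.le, hα.2⟩]
    rfl
  | succ n ih =>
    obtain ⟨z, hz⟩ := ih
    refine ⟨⌊(gaussIter α n)⁻¹⌋, (IntFractPair.stream_succ_of_some hz
      (gaussIter_mem_Ioo_and_irrational hα hirr n).2.ne_zero).trans ?_⟩
    simp [IntFractPair.of, gaussIter]

theorem partDens_get?_eq_partQuot (hα : α ∈ Set.Ioo 0 1) (hirr : Irrational α) (n : ℕ) :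
    (of α).partDens.get? n = some (partQuot α n : ℝ) := by
  obtain ⟨z, hz⟩ := intFractPair_stream_eq_gaussIter hα hirr n
  have hpos := (gaussIter_mem_Ioo_and_irrational hα hirr n).1.1
  have hsucc := IntFractPair.stream_succ_of_some hz hpos.ne'
  rw [partDen_eq_s_b (get?_of_eq_some_of_succ_get?_intFractPair_stream hsucc)]
  simp [IntFractPair.of, partQuot, ← Int.natCast_floor_eq_floor (inv_nonneg.2 hpos.le)]

theorem exists_int_contsAux (hirr : Irrational α) (n : ℕ) :
    ∃ a b : ℤ, (of α).contsAux n = ⟨a, b⟩ := by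
  induction n using Nat.twoStepInduction with
  | zero => exact ⟨1, 0, by simp [zeroth_contAux_eq_one_zero]⟩
  | one => exact ⟨⌊α⌋, 1, by simp [first_contAux_eq_h_one, of_h_eq_floor]⟩
  | more n ih₀ ih₁ =>
    obtain ⟨a₀, b₀, h₀⟩ := ih₀
    obtain ⟨a₁, b₁, h₁⟩ := ih₁
    obtain ⟨gp, hgp⟩ : ∃ gp, (of α).s.get? n = some gp :=
      Option.ne_none_iff_exists'.1
        fun h => hirr.ne_rat _ ((terminates_iff_rat α).1 ⟨n, h⟩).choose_spec
    obtain ⟨ha, z, hb⟩ := of_partNum_eq_one_and_exists_int_partDen_eq hgp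
    refine ⟨z * a₁ + a₀, z * b₁ + b₀, ?_⟩
    rw [contsAux_recurrence hgp h₀ h₁, ha, hb]
    push_cast
    ring_nf

theorem GenContFract.one_le_of_den {K : Type*} [Field K] [LinearOrder K] [IsStrictOrderedRing K]
    [FloorRing K] (v : K) (n : ℕ) : 1 ≤ (of v).dens n := by
  induction n with
  | zero => simp [zeroth_den_eq_one]
  | succ n ih => exact ih.trans of_den_mono

variable (hα : α ∈ Set.Ioo 0 1) (hirr : Irrational α)
  (hunb : ∀ B : ℕ, ∃ n : ℕ, B < partQuot α n)
include hα hirr hunb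

theorem exists_nat_abs_mul_sub_le_of_unbounded {A : ℝ} (hA : 0 < A) :
    ∃ q : ℕ, 0 < q ∧ ∃ p : ℤ, |q * α - p| ≤ 1 / (A * q) := by
  obtain ⟨n, hn⟩ := hunb ⌈A⌉₊
  have hAn : A ≤ partQuot α n := (Nat.le_ceil A).trans (mod_cast hn.le)
  obtain ⟨p, q, hpq⟩ := exists_int_contsAux hirr (n + 1)
  have hnum : (of α).nums n = p := by
    rw [num_eq_conts_a, nth_cont_eq_succ_nth_contAux, hpq]
  have hden : (of α).dens n = q := by
    rw [den_eq_conts_b, nth_cont_eq_succ_nth_contAux, hpq]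
  have hq : (1 : ℝ) ≤ q := hden ▸ one_le_of_den α n
  lift q to ℕ using by exact_mod_cast zero_le_one.trans hq
  have hq0 : (0 : ℝ) < q := by exact_mod_cast hq
  refine ⟨q, by exact_mod_cast hq0, p, ?_⟩
  have happrox := abs_sub_convergents_le' (partDens_get?_eq_partQuot hα hirr n)
  rw [conv_eq_num_div_den, hnum, hden] at happrox
  push_cast at happrox
  calc |q * α - p| = q * |α - p / q| := by
        rw [← abs_of_pos hq0, ← abs_mul, abs_of_pos hq0, mul_sub, mul_div_cancel₀ _ hq0.ne']
    _ ≤ q * (1 / (partQuot α n * q * q)) := by gcongr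
    _ = 1 / (partQuot α n * q) := by field_simp
    _ ≤ 1 / (A * q) := by gcongr

theorem exists_rat_multiples_close (N L : ℕ) {ε : ℝ} (hε : 0 < ε) :
    ∃ q : ℕ, 0 < q ∧ ∃ (p : ℤ) (η : ℝ), 0 ≤ η ∧ η ≤ 1 / 2 ∧
      (∀ k < L * q, |k * (p / q) - k * α| ≤ η) ∧ ((L * q : ℕ) : ℝ) * N * (4 * η) ≤ ε := by
  set A : ℝ := 4 * N * L ^ 2 / ε + 2 * L + 1
  have hA : 0 < A := by positivity
  have hεA : ε * A = 4 * N * L ^ 2 + ε * (2 * L + 1) := by simp only [A]; field_simp; ring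
  obtain ⟨q, hq, p, hqp⟩ := exists_nat_abs_mul_sub_le_of_unbounded hα hirr hunb hA
  have hq' : (1 : ℝ) ≤ q := by exact_mod_cast hq
  refine ⟨q, hq, p, L / (A * q), by positivity, ?_, fun k hk => ?_, ?_⟩
  · rw [div_le_div_iff₀ (by positivity) two_pos]
    have : 0 ≤ 4 * N * L ^ 2 / ε := by positivity
    nlinarith
  · have hk' : (k : ℝ) ≤ L * q := by exact_mod_cast hk.le
    calc |k * (p / q) - k * α| = k / q * |q * α - p| := by
          rw [show (k : ℝ) * (p / q) - k * α = -(k / q * (q * α - p)) by field_simp; ring,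
            abs_neg, abs_mul, abs_of_nonneg (by positivity)]
      _ ≤ L * q / q * (1 / (A * q)) := by gcongr
      _ = L / (A * q) := by field_simp
  · calc ((L * q : ℕ) : ℝ) * N * (4 * (L / (A * q))) = 4 * N * L ^ 2 / A := by
          push_cast; field_simp
      _ ≤ ε := by
          rw [div_le_iff₀ hA, mul_comm, hεA]
          have : 0 ≤ ε * (2 * L + 1) := by positivity
          linarith

end ContinuedFraction

section Arc

variable {N : ℕ} [NeZero N] {d : Fin N → ℝ}

theorem exists_arc_eq_Ico (i : Fin N) :
    ∃ (j : Fin N) (w : ℤ), arc d i = Set.Ico (d i) (d j + w) := by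
  unfold arc
  split_ifs
  · exact ⟨i + 1, 1, by simp⟩
  · exact ⟨i + 1, 0, by simp⟩

theorem measurableSet_arc (i : Fin N) : MeasurableSet (arc d i) := by
  obtain ⟨j, w, h⟩ := exists_arc_eq_Ico (d := d) i
  exact h ▸ measurableSet_Ico

theorem exists_sub_intCast_mem_arc (d : Fin N → ℝ) (y : ℝ) :
    ∃ (i : Fin N) (z : ℤ), y - z ∈ arc d i := by
  set u := d 0 + Int.fract (y - d 0)
  have hu : y - ⌊y - d 0⌋ = u := by simp only [u, ← Int.self_sub_floor]; ring
  obtain ⟨i, hi, hmax⟩ := (Finset.univ.filter fun i => d i ≤ u).exists_max_image id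
    ⟨0, by simp [u, Int.fract_nonneg]⟩
  have hiu : d i ≤ u := (Finset.mem_filter.1 hi).2
  refine ⟨i, ⌊y - d 0⌋, hu ▸ ?_⟩
  unfold arc
  split_ifs with h
  · have hwrap : i + 1 = 0 := Fin.ext (by rw [Fin.val_add, Fin.val_one', Nat.add_mod_mod, h,
      Nat.mod_self, Fin.val_zero])
    exact ⟨hiu, by rw [hwrap]; linarith [Int.fract_lt_one (y - d 0)]⟩
  · refine ⟨hiu, lt_of_not_ge fun hle => ?_⟩
    have hle' : i + 1 ≤ i := hmax (i + 1) (by simp [hle])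
    have hsucc := Fin.val_add_one_of_lt' (i := i) (by omega)
    rw [Fin.le_def] at hle'
    omega

variable {β : Type*} {f : ℝ → β} (hfper : Function.Periodic f 1)
  (hfconst : ∀ i : Fin N, ∀ x ∈ arc d i, ∀ y ∈ arc d i, f x = f y)
include hfper hfconst

theorem apply_eq_of_sub_intCast_mem_arc {y : ℝ} {i : Fin N} {z : ℤ} (h : y - z ∈ arc d i) :
    f y = f (d i) := by
  obtain ⟨j, w, harc⟩ := exists_arc_eq_Ico (d := d) i
  have hdi : d i ∈ arc d i := by
    rw [harc] at h ⊢
    exact ⟨le_rfl, h.1.trans_lt h.2⟩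
  have hshift : f (y - z) = f y := by simpa using hfper.sub_int_mul_eq (x := y) z
  rw [← hshift, hfconst i _ h _ hdi]

theorem exists_forall_apply_le_apply_breakpoint [LinearOrder β] :
    ∃ i : Fin N, ∀ y, f y ≤ f (d i) := by
  obtain ⟨i, -, hi⟩ := Finset.univ.exists_max_image (f ∘ d) Finset.univ_nonempty
  refine ⟨i, fun y => ?_⟩
  obtain ⟨j, z, h⟩ := exists_sub_intCast_mem_arc d y
  exact apply_eq_of_sub_intCast_mem_arc hfper hfconst h ▸ hi j (Finset.mem_univ j)

theorem apply_eq_of_forall_notMem_Ioc {y y' : ℝ} (hyy' : y ≤ y')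
    (h : ∀ (j : Fin N) (w : ℤ), d j + w ∉ Set.Ioc y y') : f y = f y' := by
  obtain ⟨i, z, hy⟩ := exists_sub_intCast_mem_arc d y
  obtain ⟨j, w, harc⟩ := exists_arc_eq_Ico (d := d) i
  have hy' : y' - z ∈ arc d i := by
    rw [harc] at hy ⊢
    refine ⟨by linarith [hy.1], lt_of_not_ge fun hle => h j (w + z) ⟨?_, ?_⟩⟩ <;>
      push_cast <;> linarith [hy.2]
  rw [apply_eq_of_sub_intCast_mem_arc hfper hfconst hy,
    apply_eq_of_sub_intCast_mem_arc hfper hfconst hy']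

theorem apply_eq_of_abs_sub_le {y y' η : ℝ} (hy' : |y' - y| ≤ η)
    (hfar : ∀ (j : Fin N) (w : ℤ), η < |y - (d j + w)|) : f y' = f y := by
  have hfar' := fun j w => lt_abs.1 (hfar j w)
  rw [abs_le] at hy'
  rcases le_total y y' with h | h
  · refine (apply_eq_of_forall_notMem_Ioc hfper hfconst h fun j w hw => ?_).symm
    rcases hfar' j w with h' | h' <;> linarith [hw.1, hw.2]
  · refine apply_eq_of_forall_notMem_Ioc hfper hfconst h fun j w hw => ?_
    rcases hfar' j w with h' | h' <;> linarith [hw.1, hw.2]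

theorem measurable_of_arc [MeasurableSpace β] : Measurable f := by
  intro s _
  have hpre : f ⁻¹' s = ⋃ i ∈ {i | f (d i) ∈ s}, ⋃ z : ℤ, (· - (z : ℝ)) ⁻¹' arc d i := by
    ext y
    simp only [Set.mem_preimage, Set.mem_iUnion, exists_prop]
    constructor
    · intro hy
      obtain ⟨i, z, h⟩ := exists_sub_intCast_mem_arc d y
      exact ⟨i, show f (d i) ∈ s by rwa [← apply_eq_of_sub_intCast_mem_arc hfper hfconst h], z, h⟩
    · rintro ⟨i, hi, z, h⟩
      rwa [apply_eq_of_sub_intCast_mem_arc hfper hfconst h]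
  rw [hpre]
  exact .biUnion (Set.to_countable _) fun i _ =>
    .iUnion fun z => measurable_id.sub_const _ (measurableSet_arc i)

end Arc

section Series

noncomputable def seriesTerm (α : ℝ) (b r : ℝ → ℝ) (x : ℝ) (n : ℕ) : ℝ :=
  (∏ k ∈ Finset.range n, r (x + k * α)) * b (x + n * α)

noncomputable def partialXser (α : ℝ) (b r : ℝ → ℝ) (K : ℕ) (x : ℝ) : ℝ :=
  ∑ k ∈ Finset.range K, seriesTerm α b r x k

variable {α : ℝ} {b r : ℝ → ℝ}

theorem partialXser_congr {α' x x' : ℝ} {K : ℕ}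
    (h : ∀ k < K, b (x + k * α) = b (x' + k * α') ∧ r (x + k * α) = r (x' + k * α')) :
    partialXser α b r K x = partialXser α' b r K x' :=
  Finset.sum_congr rfl fun k hk => by
    have hk := Finset.mem_range.1 hk
    rw [seriesTerm, seriesTerm, (h k hk).1,
      Finset.prod_congr rfl fun j hj => (h j ((Finset.mem_range.1 hj).trans hk)).2]

theorem abs_seriesTerm_le {B c : ℝ} (hr0 : ∀ x, 0 ≤ r x) (hrc : ∀ x, r x ≤ c)
    (hb : ∀ x, |b x| ≤ B) (x : ℝ) (n : ℕ) : |seriesTerm α b r x n| ≤ B * c ^ n := by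
  rw [seriesTerm, abs_mul, abs_of_nonneg (Finset.prod_nonneg fun k _ => hr0 _), mul_comm B]
  have hprod : ∏ k ∈ Finset.range n, r (x + k * α) ≤ c ^ n := by
    simpa using Finset.prod_le_prod (fun k _ => hr0 _) fun k (_ : k ∈ Finset.range n) => hrc _
  exact mul_le_mul hprod (hb _) (abs_nonneg _) (pow_nonneg ((hr0 0).trans (hrc 0)) n)

variable {B c : ℝ} (hc₀ : 0 ≤ c) (hc₁ : c < 1)
  (hterm : ∀ x n, |seriesTerm α b r x n| ≤ B * c ^ n)
include hc₀ hc₁ hterm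

theorem summable_seriesTerm (x : ℝ) : Summable (seriesTerm α b r x) :=
  .of_norm_bounded ((summable_geometric_of_lt_one hc₀ hc₁).mul_left B) (hterm x)

theorem abs_Xser_sub_partialXser_le (x : ℝ) (K : ℕ) :
    |Xser α b r x - partialXser α b r K x| ≤ B * c ^ K / (1 - c) := by
  have hsplit := (summable_seriesTerm hc₀ hc₁ hterm x).sum_add_tsum_nat_add K
  rw [show Xser α b r x = ∑' n, seriesTerm α b r x n from rfl, ← hsplit, partialXser,
    add_sub_cancel_left, div_eq_mul_inv]
  refine tsum_of_norm_bounded (f := fun i => seriesTerm α b r x (i + K))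
    ((hasSum_geometric_of_lt_one hc₀ hc₁).mul_left (B * c ^ K)) fun i => ?_
  calc ‖seriesTerm α b r x (i + K)‖ ≤ B * c ^ (i + K) := hterm x _
    _ = B * c ^ K * c ^ i := by ring

theorem measurable_Xser (hbm : Measurable b) (hrm : Measurable r) : Measurable (Xser α b r) := by
  refine measurable_of_tendsto_metrizable (f := partialXser α b r)
    (fun K => Finset.measurable_sum _ fun k _ => ?_)
    (tendsto_pi_nhds.2 fun x => (summable_seriesTerm hc₀ hc₁ hterm x).hasSum.tendsto_sum_nat)
  exact (Finset.measurable_prod _ fun j _ => hrm.comp (measurable_add_const _)).mul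
    (hbm.comp (measurable_add_const _))

end Series

theorem exists_mem_insert_forall_notMem_Ioc {γ : Type*} [LinearOrder γ] (P : Finset γ) {a x : γ}
    (hax : a ≤ x) : ∃ s ∈ insert a P, a ≤ s ∧ s ≤ x ∧ ∀ u ∈ P, u ∉ Set.Ioc s x := by
  classical
  obtain ⟨s, hs, hmax⟩ := ((insert a P).filter (· ≤ x)).exists_max_image id ⟨a, by simp [hax]⟩
  rw [Finset.mem_filter] at hs
  exact ⟨s, hs.1, hmax a (by simp [hax]), hs.2,
    fun u hu hus => (hmax u (by simp [hu, hus.2])).not_gt hus.1⟩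

theorem Int.fract_sub_mul_div_eq_fract_sub_mod_mul_div (y : ℝ) (p : ℤ) {q : ℕ} (hq : q ≠ 0)
    (k : ℕ) : Int.fract (y - k * (p / q)) = Int.fract (y - (k % q : ℕ) * (p / q)) := by
  have hk : (k : ℝ) * (p / q) = (k % q : ℕ) * (p / q) + (((k / q : ℕ) : ℤ) * p : ℤ) := by
    have hk' : (k : ℝ) = (k % q : ℕ) + q * (k / q : ℕ) := by
      exact_mod_cast (Nat.mod_add_div k q).symm
    rw [Int.cast_mul, Int.cast_natCast, hk']
    field_simp
  rw [hk, ← sub_sub, Int.fract_sub_intCast]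

theorem volume_restrict_Ico_setOf_abs_sub_add_intCast_le (c : ℝ) {η : ℝ} (hη₀ : 0 ≤ η)
    (hη : η ≤ 1 / 2) :
    volume.restrict (Set.Ico (0 : ℝ) 1) {x | ∃ w : ℤ, |x - (c + w)| ≤ η} ≤
      ENNReal.ofReal (4 * η) := by
  set w₀ := ⌈-c - η⌉
  -- as `η ≤ 1 / 2`, only the translates by `w₀` and `w₀ + 1` can come `η`-close to `[0, 1)`
  have hsub : {x | ∃ w : ℤ, |x - (c + w)| ≤ η} ∩ Set.Ico 0 1 ⊆
      Metric.closedBall (c + w₀) η ∪ Metric.closedBall (c + (w₀ + 1 : ℤ)) η := by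
    rintro x ⟨⟨w, hw⟩, hx₀, hx₁⟩
    have hw' := abs_le.1 hw
    have hlo : w₀ ≤ w := Int.ceil_le.2 (by linarith)
    have hhi : w < w₀ + 2 := by
      have := Int.le_ceil (-c - η)
      exact_mod_cast (by linarith : (w : ℝ) < w₀ + 2)
    obtain rfl | rfl : w = w₀ ∨ w = w₀ + 1 := by omega
    exacts [Or.inl (by rwa [Metric.mem_closedBall, Real.dist_eq]),
      Or.inr (by rwa [Metric.mem_closedBall, Real.dist_eq])]
  rw [Measure.restrict_apply' measurableSet_Ico]
  calc _ ≤ volume (Metric.closedBall (c + w₀) η ∪ Metric.closedBall (c + (w₀ + 1 : ℤ)) η) :=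
        measure_mono hsub
    _ ≤ ENNReal.ofReal (2 * η) + ENNReal.ofReal (2 * η) :=
        (measure_union_le _ _).trans_eq (by rw [Real.volume_closedBall, Real.volume_closedBall])
    _ = ENNReal.ofReal (4 * η) := by
        rw [← ENNReal.ofReal_add (by positivity) (by positivity)]; ring_nf

section PiecewiseConstant

variable {N : ℕ} [NeZero N] {d : Fin N → ℝ} {b r : ℝ → ℝ}
  (hbper : Function.Periodic b 1) (hrper : Function.Periodic r 1)
  (hbconst : ∀ i : Fin N, ∀ x ∈ arc d i, ∀ y ∈ arc d i, b x = b y)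
  (hrconst : ∀ i : Fin N, ∀ x ∈ arc d i, ∀ y ∈ arc d i, r x = r y)
include hbper hrper hbconst hrconst

theorem exists_abs_seriesTerm_le (α : ℝ) (hr : ∀ x, r x ∈ Set.Ioo (0 : ℝ) 1) :
    ∃ B c : ℝ, 0 ≤ B ∧ 0 ≤ c ∧ c < 1 ∧ ∀ x n, |seriesTerm α b r x n| ≤ B * c ^ n := by
  obtain ⟨i, hrc⟩ := exists_forall_apply_le_apply_breakpoint hrper hrconst
  obtain ⟨j, hb⟩ := exists_forall_apply_le_apply_breakpoint (f := fun x => |b x|)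
    (fun x => congrArg abs (hbper x)) fun i x hx y hy => by rw [hbconst i x hx y hy]
  exact ⟨_, _, abs_nonneg _, (hr _).1.le, (hr _).2,
    abs_seriesTerm_le (fun x => (hr x).1.le) hrc hb⟩

/-- Over the rotation by `p / q`, all discontinuities of `partialXser` in `[0, 1)` are among the
points `Int.fract (d j - k * (p / q))` with `k < q`. -/
theorem exists_finset_forall_partialXser_rat_mem (p : ℤ) {q : ℕ} (hq : 0 < q) (K : ℕ) :
    ∃ V : Finset ℝ, V.card ≤ q * N + 1 ∧
      ∀ x ∈ Set.Ico (0 : ℝ) 1, partialXser (p / q) b r K x ∈ V := by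
  classical
  set P : Finset ℝ := (Finset.range q ×ˢ Finset.univ).image
    fun kj : ℕ × Fin N => Int.fract (d kj.2 - kj.1 * (p / q))
  refine ⟨(insert 0 P).image (partialXser (p / q) b r K), ?_, fun x hx => ?_⟩
  · calc _ ≤ (insert 0 P).card := Finset.card_image_le
      _ ≤ P.card + 1 := Finset.card_insert_le _ _
      _ ≤ q * N + 1 := by gcongr; exact Finset.card_image_le.trans (by simp)
  obtain ⟨s, hs, h0s, hsx, hP⟩ := exists_mem_insert_forall_notMem_Ioc P hx.1
  refine Finset.mem_image.2 ⟨s, hs, partialXser_congr fun k _ => ?_⟩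
  have hno : ∀ (j : Fin N) (w : ℤ), d j + w ∉ Set.Ioc (s + k * (p / q)) (x + k * (p / q)) := by
    intro j w hw
    have hu : d j + w - k * (p / q) ∈ Set.Ioc s x := ⟨by linarith [hw.1], by linarith [hw.2]⟩
    refine hP _ (Finset.mem_image.2 ⟨(k % q, j), by simp [Nat.mod_lt _ hq], ?_⟩) hu
    rw [← Int.fract_sub_mul_div_eq_fract_sub_mod_mul_div _ _ hq.ne', ← Int.fract_add_intCast _ w,
      Int.fract_eq_self.2 ⟨by linarith [hu.1], by linarith [hu.2, hx.2]⟩]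
    ring
  have hle : s + k * (p / q) ≤ x + k * (p / q) := by linarith
  exact ⟨apply_eq_of_forall_notMem_Ioc hbper hbconst hle hno,
    apply_eq_of_forall_notMem_Ioc hrper hrconst hle hno⟩

theorem volume_restrict_Ico_partialXser_ne_le {α β η : ℝ} {K : ℕ} (hη₀ : 0 ≤ η)
    (hη : η ≤ 1 / 2) (hαβ : ∀ k < K, |k * β - k * α| ≤ η) :
    volume.restrict (Set.Ico (0 : ℝ) 1) {x | partialXser α b r K x ≠ partialXser β b r K x} ≤
      ENNReal.ofReal (K * N * (4 * η)) := by
  have hsub : {x | partialXser α b r K x ≠ partialXser β b r K x} ⊆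
      ⋃ k ∈ Finset.range K, ⋃ j : Fin N, {x | ∃ w : ℤ, |x - (d j - k * α + w)| ≤ η} := by
    intro x hx
    by_contra hx'
    simp only [Set.mem_iUnion] at hx'
    refine hx (partialXser_congr fun k hk => ?_)
    have hclose : |(x + k * β) - (x + k * α)| ≤ η := by
      rw [add_sub_add_left_eq_sub]; exact hαβ k hk
    have hfar : ∀ (j : Fin N) (w : ℤ), η < |x + k * α - (d j + w)| := fun j w =>
      lt_of_not_ge fun h => hx' ⟨k, Finset.mem_range.2 hk, j, w, by
        rwa [show x - (d j - k * α + w) = x + k * α - (d j + w) by ring]⟩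
    exact ⟨(apply_eq_of_abs_sub_le hbper hbconst hclose hfar).symm,
      (apply_eq_of_abs_sub_le hrper hrconst hclose hfar).symm⟩
  calc _ ≤ ∑ k ∈ Finset.range K, ∑ j : Fin N, volume.restrict (Set.Ico (0 : ℝ) 1)
        {x | ∃ w : ℤ, |x - (d j - k * α + w)| ≤ η} :=
        (measure_mono hsub).trans <| (measure_biUnion_finset_le _ _).trans <|
          Finset.sum_le_sum fun k _ => measure_iUnion_fintype_le _ _
    _ ≤ ∑ _k ∈ Finset.range K, ∑ _j : Fin N, ENNReal.ofReal (4 * η) := by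
        gcongr; exact volume_restrict_Ico_setOf_abs_sub_add_intCast_le _ hη₀ hη
    _ = ENNReal.ofReal (K * N * (4 * η)) := by
        simp only [Finset.sum_const, Finset.card_range, Finset.card_univ, Fintype.card_fin,
          nsmul_eq_mul]
        rw [ENNReal.ofReal_mul (by positivity : (0 : ℝ) ≤ K * N), ← Nat.cast_mul,
          ENNReal.ofReal_natCast, Nat.cast_mul, mul_assoc]

end PiecewiseConstant

theorem exists_nat_forall_abs_mul_sub_round_le (W : Finset ℝ) (S : ℕ) {D : ℕ} (hD : 0 < D) :
    ∃ t : ℕ, S ≤ t ∧ t ≤ S * D ^ W.card ∧ ∀ w ∈ W, |t * w - round (t * w)| ≤ 1 / D := by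
  classical
  have hD' : (0 : ℝ) < D := by exact_mod_cast hD
  -- pigeonhole on the cells `[i / D, (i + 1) / D)` containing the `Int.fract (j S w)`
  set cell : ℕ → W → ℕ := fun j w => ⌊Int.fract ((j * S : ℕ) * (w : ℝ)) * D⌋₊
  have hmaps : Set.MapsTo cell (Finset.range (D ^ W.card + 1))
      (Fintype.piFinset fun _ : W => Finset.range D) := by
    intro j _
    simp only [Finset.mem_coe, Fintype.mem_piFinset, Finset.mem_range]
    intro w
    refine (Nat.floor_lt (by positivity)).2 ?_
    nlinarith [Int.fract_lt_one ((j * S : ℕ) * (w : ℝ))]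
  obtain ⟨j₁, hj₁, j₂, hj₂, hne, heq⟩ :=
    Finset.exists_ne_map_eq_of_card_lt_of_maps_to (by simp) hmaps
  wlog hlt : j₁ < j₂ generalizing j₁ j₂
  · exact this j₂ hj₂ j₁ hj₁ hne.symm heq.symm (by omega)
  have hj₂' := Finset.mem_range.1 hj₂
  refine ⟨(j₂ - j₁) * S, Nat.le_mul_of_pos_left S (by omega), ?_, fun w hw => ?_⟩
  · rw [mul_comm S]; gcongr; omega
  set a₁ : ℝ := (j₁ * S : ℕ) * w
  set a₂ : ℝ := (j₂ * S : ℕ) * w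
  have hfloor : ⌊Int.fract a₂ * D⌋ = ⌊Int.fract a₁ * D⌋ := by
    rw [← Int.natCast_floor_eq_floor (by positivity), ← Int.natCast_floor_eq_floor (by positivity)]
    exact congrArg Nat.cast (congrFun heq ⟨w, hw⟩).symm
  have hdiff : (((j₂ - j₁) * S : ℕ) : ℝ) * w - (⌊a₂⌋ - ⌊a₁⌋ : ℤ) =
      Int.fract a₂ - Int.fract a₁ := by
    simp only [a₁, a₂, Int.fract, Nat.cast_mul, Nat.cast_sub hlt.le]
    push_cast
    ring
  calc _ ≤ |(((j₂ - j₁) * S : ℕ) : ℝ) * w - (⌊a₂⌋ - ⌊a₁⌋ : ℤ)| := round_le _ _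
    _ ≤ 1 / D := by
      rw [hdiff, le_div_iff₀ hD', ← abs_of_pos hD', ← abs_mul, sub_mul]
      exact (Int.abs_sub_lt_one_of_floor_eq_floor hfloor).le

theorem exists_mul_pow_mul_pow_le {c : ℝ} (hc₀ : 0 ≤ c) (hc₁ : c < 1) {C D : ℝ} (hC : 0 ≤ C)
    (hD : 0 ≤ D) (M : ℕ) {ε : ℝ} (hε : 0 < ε) :
    ∃ L : ℕ, ∀ q : ℕ, 0 < q → C * D ^ (q * M + 1) * c ^ (L * q) ≤ ε := by
  have hlim : Tendsto (fun L : ℕ => D ^ M * c ^ L) atTop (𝓝 0) := by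
    simpa using (tendsto_pow_atTop_nhds_zero_of_lt_one hc₀ hc₁).const_mul (D ^ M)
  have hlim' : Tendsto (fun L : ℕ => C * D * (D ^ M * c ^ L)) atTop (𝓝 0) := by
    simpa using hlim.const_mul (C * D)
  obtain ⟨L, hL₁, hLε⟩ := ((hlim.eventually (eventually_le_nhds zero_lt_one)).and
    (hlim'.eventually (eventually_le_nhds hε))).exists
  refine ⟨L, fun q hq => ?_⟩
  calc C * D ^ (q * M + 1) * c ^ (L * q) = C * D * (D ^ M * c ^ L) ^ q := by
        rw [mul_pow, ← pow_mul, ← pow_mul, pow_succ]; ring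
    _ ≤ C * D * (D ^ M * c ^ L) := by
        gcongr; exact pow_le_of_le_one (by positivity) hL₁ hq.ne'
    _ ≤ ε := hLε

theorem abs_mul_sub_round_le_of_abs_sub_le {x y τ δ t : ℝ} (ht : 0 ≤ t) (hxy : |x - y| ≤ τ)
    (hy : |t * y - round (t * y)| ≤ δ) : |t * x - round (t * x)| ≤ t * τ + δ :=
  calc |t * x - round (t * x)| ≤ |t * x - round (t * y)| := round_le _ _
    _ = |t * (x - y) + (t * y - round (t * y))| := by ring_nf
    _ ≤ |t * (x - y)| + |t * y - round (t * y)| := abs_add_le _ _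
    _ ≤ t * τ + δ := by rw [abs_mul, abs_of_nonneg ht]; gcongr

section Fourier

open Complex

theorem norm_exp_two_pi_I_mul (m : ℤ) (y : ℝ) : ‖exp (2 * Real.pi * I * m * y)‖ = 1 := by
  rw [show 2 * Real.pi * I * m * y = I * ↑(2 * Real.pi * m * y) by push_cast; ring,
    norm_exp_I_mul_ofReal]

theorem norm_exp_two_pi_I_mul_sub_one_le (m : ℤ) (y : ℝ) :
    ‖exp (2 * Real.pi * I * m * y) - 1‖ ≤ 2 * Real.pi * |m| * |y - round y| := by
  have hshift : exp (2 * Real.pi * I * m * y) = exp (I * ↑(2 * Real.pi * m * (y - round y))) := by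
    rw [show 2 * Real.pi * I * m * y
        = I * ↑(2 * Real.pi * m * (y - round y)) + ↑(m * round y) * (2 * Real.pi * I) by
      push_cast; ring, exp_add, exp_int_mul_two_pi_mul_I, mul_one]
  rw [hshift]
  refine Real.norm_exp_I_mul_ofReal_sub_one_le.trans_eq ?_
  rw [Real.norm_eq_abs, abs_mul, abs_mul, abs_mul, abs_two, abs_of_pos Real.pi_pos, Int.cast_abs]

theorem norm_integral_exp_two_pi_I_mul_sub_one_le {Ω : Type*} [MeasurableSpace Ω]
    (μ : Measure Ω) [IsProbabilityMeasure μ] {Y : Ω → ℝ} (hY : Measurable Y) (m : ℤ) {δ : ℝ}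
    (hδ : 0 ≤ δ) :
    ‖(∫ ω, exp (2 * Real.pi * I * m * Y ω) ∂μ) - 1‖ ≤
      2 * μ.real {ω | δ < |Y ω - round (Y ω)|} + 2 * Real.pi * |m| * δ := by
  set E := {ω | δ < |Y ω - round (Y ω)|}
  have hround : Measurable fun ω => (round (Y ω) : ℝ) := by simp_rw [round_eq]; fun_prop
  have hE : MeasurableSet E := measurableSet_lt measurable_const (hY.sub hround).abs
  have hint : Integrable (fun ω => exp (2 * Real.pi * I * m * Y ω)) μ :=
    .of_bound (by fun_prop) 1 (.of_forall fun ω => (norm_exp_two_pi_I_mul m (Y ω)).le)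
  have hpt : ∀ ω, ‖exp (2 * Real.pi * I * m * Y ω) - 1‖ ≤
      E.indicator (fun _ => 2) ω + 2 * Real.pi * |m| * δ := by
    intro ω
    by_cases hω : ω ∈ E
    · have hle : ‖exp (2 * Real.pi * I * m * Y ω) - 1‖ ≤ 2 := by
        refine (norm_sub_le _ _).trans ?_
        rw [norm_exp_two_pi_I_mul, norm_one]
        norm_num
      have : 0 ≤ 2 * Real.pi * (|m| : ℤ) * δ := by positivity
      rw [Set.indicator_of_mem hω]
      linarith
    · rw [Set.indicator_of_notMem hω, zero_add]
      refine (norm_exp_two_pi_I_mul_sub_one_le m (Y ω)).trans ?_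
      gcongr
      exact not_lt.1 hω
  calc _ = ‖∫ ω, (exp (2 * Real.pi * I * m * Y ω) - 1) ∂μ‖ := by
        rw [integral_sub hint (integrable_const 1), integral_const, probReal_univ, one_smul]
    _ ≤ ∫ ω, ‖exp (2 * Real.pi * I * m * Y ω) - 1‖ ∂μ := norm_integral_le_integral_norm _
    _ ≤ ∫ ω, (E.indicator (fun _ => 2) ω + 2 * Real.pi * |m| * δ) ∂μ :=
        integral_mono (hint.sub (integrable_const 1)).norm
          ((integrable_const 2).indicator hE |>.add (integrable_const _)) hpt
    _ = _ := by
        rw [integral_add ((integrable_const 2).indicator hE) (integrable_const _),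
          integral_indicator_const _ hE, integral_const, probReal_univ, smul_eq_mul, one_smul,
          mul_comm]

end Fourier

theorem exists_nat_volume_restrict_far_from_int_le {α : ℝ} (hα : α ∈ Set.Ioo 0 1)
    (hirr : Irrational α) (hunb : ∀ B : ℕ, ∃ n : ℕ, B < partQuot α n)
    {N : ℕ} [NeZero N] {d : Fin N → ℝ} {b r : ℝ → ℝ}
    (hbper : Function.Periodic b 1) (hrper : Function.Periodic r 1)
    (hr : ∀ x, r x ∈ Set.Ioo (0 : ℝ) 1)
    (hbconst : ∀ i : Fin N, ∀ x ∈ arc d i, ∀ y ∈ arc d i, b x = b y)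
    (hrconst : ∀ i : Fin N, ∀ x ∈ arc d i, ∀ y ∈ arc d i, r x = r y) {ε : ℝ} (hε : 0 < ε)
    (S : ℕ) :
    ∃ t : ℕ, S ≤ t ∧ volume.restrict (Set.Ico (0 : ℝ) 1)
      {x | 2 * ε < |t * Xser α b r x - round (t * Xser α b r x)|} ≤ ENNReal.ofReal ε := by
  obtain ⟨B, c, hB, hc0, hc1, hterm⟩ := exists_abs_seriesTerm_le hbper hrper hbconst hrconst α hr
  set D := ⌈1 / ε⌉₊
  have hD : 0 < D := Nat.ceil_pos.2 (by positivity)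
  have hDε : 1 / (D : ℝ) ≤ ε := (one_div_le (by positivity) hε).2 (Nat.le_ceil _)
  obtain ⟨L, hL⟩ := exists_mul_pow_mul_pow_le hc0 hc1 (C := S * B / (1 - c))
    (by have := sub_pos.2 hc1; positivity) (Nat.cast_nonneg D) N hε
  obtain ⟨q, hq, p, η, hη₀, hη, hαβ, hηε⟩ := exists_rat_multiples_close hα hirr hunb N L hε
  obtain ⟨V, hVcard, hV⟩ :=
    exists_finset_forall_partialXser_rat_mem hbper hrper hbconst hrconst p hq (L * q)
  obtain ⟨t, hSt, htle, ht⟩ := exists_nat_forall_abs_mul_sub_round_le V S hD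
  have htail : (t : ℝ) * (B * c ^ (L * q) / (1 - c)) ≤ ε := by
    have htle' : (t : ℝ) ≤ S * D ^ (q * N + 1) := by
      exact_mod_cast htle.trans (by gcongr)
    calc (t : ℝ) * (B * c ^ (L * q) / (1 - c))
        ≤ S * D ^ (q * N + 1) * (B * c ^ (L * q) / (1 - c)) := by
          have := sub_pos.2 hc1; gcongr
      _ = S * B / (1 - c) * D ^ (q * N + 1) * c ^ (L * q) := by ring
      _ ≤ ε := hL q hq
  have hgood : ∀ x ∈ Set.Ico (0 : ℝ) 1,
      partialXser α b r (L * q) x = partialXser (p / q) b r (L * q) x →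
      |t * Xser α b r x - round (t * Xser α b r x)| ≤ 2 * ε := by
    intro x hx hxe
    have := abs_mul_sub_round_le_of_abs_sub_le (Nat.cast_nonneg t)
      (hxe ▸ abs_Xser_sub_partialXser_le hc0 hc1 hterm x (L * q)) ((ht _ (hV x hx)).trans hDε)
    linarith
  refine ⟨t, hSt, ?_⟩
  calc _ ≤ volume.restrict (Set.Ico (0 : ℝ) 1)
        {x | partialXser α b r (L * q) x ≠ partialXser (p / q) b r (L * q) x} := by
        refine measure_mono_ae ?_
        filter_upwards [ae_restrict_mem measurableSet_Ico] with x hx hbad hxe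
        exact (hgood x hx hxe).not_gt hbad
    _ ≤ ENNReal.ofReal ((L * q : ℕ) * N * (4 * η)) :=
        volume_restrict_Ico_partialXser_ne_le hbper hrper hbconst hrconst hη₀ hη hαβ
    _ ≤ ENNReal.ofReal ε := ENNReal.ofReal_le_ofReal hηε

theorem fourier_tendsto_one_of_unbounded_partial_quotients_general
    (α : ℝ) (hα : α ∈ Set.Ioo (0 : ℝ) 1) (hirr : Irrational α)
    (N : ℕ) [NeZero N] (d : Fin N → ℝ)
    (b r : ℝ → ℝ) (hbper : Function.Periodic b 1) (hrper : Function.Periodic r 1)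
    (hr : ∀ x, r x ∈ Set.Ioo (0 : ℝ) 1)
    (hbconst : ∀ i : Fin N, ∀ x ∈ arc d i, ∀ y ∈ arc d i, b x = b y)
    (hrconst : ∀ i : Fin N, ∀ x ∈ arc d i, ∀ y ∈ arc d i, r x = r y)
    -- the sequence of partial quotients is unbounded
    (hunb : ∀ B : ℕ, ∃ n : ℕ, B < partQuot α n) :
    ∃ t : ℕ → ℕ, (∀ n, 0 < t n) ∧ Tendsto t atTop atTop ∧
      ∀ m : ℕ, 0 < m →
        Tendsto
          (fun n : ℕ => ∫ x : ℝ,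
            Complex.exp (2 * Real.pi * Complex.I * (m : ℂ) * (t n : ℂ) * x)
            ∂(Measure.map (Xser α b r) (volume.restrict (Set.Ico (0 : ℝ) 1))))
          atTop (𝓝 1) := by
  set μ := volume.restrict (Set.Ico (0 : ℝ) 1)
  have : IsProbabilityMeasure μ := ⟨by simp [μ]⟩
  obtain ⟨B, c, -, hc0, hc1, hterm⟩ := exists_abs_seriesTerm_le hbper hrper hbconst hrconst α hr
  have hX : Measurable (Xser α b r) := measurable_Xser hc0 hc1 hterm
    (measurable_of_arc hbper hbconst) (measurable_of_arc hrper hrconst)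
  choose t ht hbad using fun n : ℕ => exists_nat_volume_restrict_far_from_int_le hα hirr hunb
    hbper hrper hr hbconst hrconst (ε := 1 / (n + 1)) (by positivity) (n + 1)
  refine ⟨t, fun n => (ht n).trans_lt' n.succ_pos,
    tendsto_atTop_mono ht (tendsto_add_atTop_nat 1), fun m _ => ?_⟩
  have hg : Tendsto (fun n : ℕ => (2 + 2 * Real.pi * m * 2) * (1 / ((n : ℝ) + 1))) atTop (𝓝 0) := by
    simpa using tendsto_one_div_add_atTop_nhds_zero_nat.const_mul (2 + 2 * Real.pi * m * 2)
  refine tendsto_iff_norm_sub_tendsto_zero.2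
    (squeeze_zero (fun _ => norm_nonneg _) (fun n => ?_) hg)
  have hmeasure := ENNReal.toReal_le_of_le_ofReal (by positivity) (hbad n)
  rw [← measureReal_def] at hmeasure
  rw [integral_map hX.aemeasurable (by fun_prop)]
  calc _ = ‖(∫ x, Complex.exp (2 * Real.pi * Complex.I * ((m : ℤ) : ℂ) *
        ((t n * Xser α b r x : ℝ) : ℂ)) ∂μ) - 1‖ := by push_cast; ring_nf
    _ ≤ _ := norm_integral_exp_two_pi_I_mul_sub_one_le μ (hX.const_mul (t n : ℝ)) m
        (δ := 2 * (1 / (n + 1))) (by positivity)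
    _ ≤ _ := by rw [Nat.abs_cast, Int.cast_natCast]; linarith

/-- If the partial quotients of `α` are unbounded, then there are integers `t_n → ∞` with
`t_n X mod 1 → δ_0` in law; equivalently `P̂_X(m t_n) → 1` for every positive integer `m`. -/
theorem fourier_tendsto_one_of_unbounded_partial_quotients
    (α : ℝ) (hα : α ∈ Set.Ioo (0 : ℝ) 1) (hirr : Irrational α)
    (N : ℕ) [NeZero N] (d : Fin N → ℝ)
    (hd : StrictMono d) (hdmem : ∀ i, d i ∈ Set.Ico (0 : ℝ) 1)
    (b r : ℝ → ℝ) (hbper : Function.Periodic b 1) (hrper : Function.Periodic r 1)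
    (hr : ∀ x, r x ∈ Set.Ioo (0 : ℝ) 1)
    (hbconst : ∀ i : Fin N, ∀ x ∈ arc d i, ∀ y ∈ arc d i, b x = b y)
    (hrconst : ∀ i : Fin N, ∀ x ∈ arc d i, ∀ y ∈ arc d i, r x = r y)
    -- the sequence of partial quotients is unbounded
    (hunb : ∀ B : ℕ, ∃ n : ℕ, B < partQuot α n) :
    ∃ t : ℕ → ℕ, (∀ n, 0 < t n) ∧ Tendsto t atTop atTop ∧
      ∀ m : ℕ, 0 < m →
        Tendsto
          (fun n : ℕ => ∫ x : ℝ,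
            Complex.exp (2 * Real.pi * Complex.I * (m : ℂ) * (t n : ℂ) * x)
            ∂(Measure.map (Xser α b r) (volume.restrict (Set.Ico (0 : ℝ) 1))))
          atTop (𝓝 1) :=
  fourier_tendsto_one_of_unbounded_partial_quotients_general α hα hirr N d b r hbper hrper hr
    hbconst hrconst hunb
end

section
/- Let (Ω,𝒜,μ) be a probability space and Y:Ω→ℝ measurable. Suppose there are constants C>0, c>0, ρ∈(0,1) and measurable functions Y_n:Ω→ℝ (n≥1) such that each Y_n takes at most c·n values and sup_{ω∈Ω}|Y(ω)−Y_n(ω)|≤C·ρⁿ. Then the support of the law of Y has Lebesgue measure zero; in particular the law of Y is singular with respect to Lebesgue measure. -/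
/-!
Each `Yₙ` has at most `c n` values and `Y` stays within `C ρⁿ` of them, so the range of `Y`,
hence also the support of its law, is covered by `c n` intervals of length `2 C ρⁿ`. The total
length `2 C c n ρⁿ` tends to `0`, so the support is Lebesgue-null; the law is carried by its
support, which makes it singular.
-/

open MeasureTheory Filter Topology

/-- The (topological) support of a measure on `ℝ`: points all of whose open
neighbourhoods have positive measure. -/
def msupport (μ : Measure ℝ) : Set ℝ :=
  {x : ℝ | ∀ U : Set ℝ, IsOpen U → x ∈ U → 0 < μ U}

open Set Metric

lemma msupport_eq_support (ν : Measure ℝ) : msupport ν = ν.support := by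
  rw [Measure.support_eq_forall_isOpen]
  ext x
  exact forall_congr' fun _ => Imp.swap

namespace MeasureTheory.Measure

variable {X : Type*} [TopologicalSpace X] [MeasurableSpace X]

lemma support_map_subset_closure_range [OpensMeasurableSpace X] {α : Type*} [MeasurableSpace α]
    (μ : Measure α) (f : α → X) : (μ.map f).support ⊆ closure (range f) := by
  refine support_subset_of_isClosed isClosed_closure ?_
  by_cases hf : AEMeasurable f μ
  · exact (ae_map_iff hf isClosed_closure.measurableSet).mpr
      (Eventually.of_forall fun a => subset_closure (mem_range_self a))
  · simp [map_of_not_aemeasurable hf]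

lemma mutuallySingular_of_measure_support_eq_zero [OpensMeasurableSpace X]
    [HereditarilyLindelofSpace X] {μ ν : Measure X} (h : ν μ.support = 0) : μ ⟂ₘ ν :=
  ⟨μ.supportᶜ, isOpen_compl_support.measurableSet, measure_compl_support, by rwa [compl_compl]⟩

end MeasureTheory.Measure

lemma volume_biUnion_closedBall_le (s : Finset ℝ) (r : ℝ) :
    volume (⋃ v ∈ s, closedBall v r) ≤ s.card * ENNReal.ofReal (2 * r) :=
  calc volume (⋃ v ∈ s, closedBall v r)
      ≤ ∑ v ∈ s, volume (closedBall v r) := measure_biUnion_finset_le s _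
    _ = s.card * ENNReal.ofReal (2 * r) := by
      simp only [Real.volume_closedBall, Finset.sum_const, nsmul_eq_mul]

lemma volume_eq_zero_of_forall_subset_biUnion_closedBall {A : Set ℝ} {C c ρ : ℝ} (hC : 0 ≤ C)
    (hρ₀ : 0 ≤ ρ) (hρ₁ : ρ < 1)
    (hcover : ∀ n : ℕ, 1 ≤ n → ∃ s : Finset ℝ, (s.card : ℝ) ≤ c * n ∧
      A ⊆ ⋃ v ∈ s, closedBall v (C * ρ ^ n)) :
    volume A = 0 := by
  have hbound : ∀ n : ℕ, 1 ≤ n → volume A ≤ ENNReal.ofReal (2 * C * c * (n * ρ ^ n)) := by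
    intro n hn
    obtain ⟨s, hs, hAs⟩ := hcover n hn
    have hr : 0 ≤ 2 * (C * ρ ^ n) := by positivity
    calc volume A ≤ s.card * ENNReal.ofReal (2 * (C * ρ ^ n)) :=
          (measure_mono hAs).trans (volume_biUnion_closedBall_le s _)
      _ = ENNReal.ofReal (s.card * (2 * (C * ρ ^ n))) := by
          rw [← ENNReal.ofReal_natCast, ENNReal.ofReal_mul (Nat.cast_nonneg _)]
      _ ≤ ENNReal.ofReal (2 * C * c * (n * ρ ^ n)) := by
          refine ENNReal.ofReal_le_ofReal ((mul_le_mul_of_nonneg_right hs hr).trans_eq ?_)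
          ring
  have hlim : Tendsto (fun n : ℕ => ENNReal.ofReal (2 * C * c * (n * ρ ^ n))) atTop (𝓝 0) := by
    simpa using ENNReal.tendsto_ofReal
      ((tendsto_self_mul_const_pow_of_lt_one hρ₀ hρ₁).const_mul (2 * C * c))
  exact nonpos_iff_eq_zero.mp (ge_of_tendsto hlim (eventually_atTop.mpr ⟨1, hbound⟩))

theorem law_singular_of_geometric_approximation_by_simple_general
    {Ω : Type*} [MeasurableSpace Ω] (μ : Measure Ω)
    (Y : Ω → ℝ)
    (C c ρ : ℝ) (hC : 0 < C) (hρ : ρ ∈ Set.Ioo (0 : ℝ) 1)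
    (Yn : ℕ → Ω → ℝ)
    (hYnval : ∀ n : ℕ, 1 ≤ n → ∃ s : Finset ℝ, (s.card : ℝ) ≤ c * n ∧ ∀ ω, Yn n ω ∈ s)
    (happrox : ∀ n : ℕ, 1 ≤ n → ∀ ω : Ω, |Y ω - Yn n ω| ≤ C * ρ ^ n) :
    volume (msupport (μ.map Y)) = 0 ∧ μ.map Y ⟂ₘ volume := by
  rw [msupport_eq_support]
  have hcover : ∀ n : ℕ, 1 ≤ n → ∃ s : Finset ℝ, (s.card : ℝ) ≤ c * n ∧
      (μ.map Y).support ⊆ ⋃ v ∈ s, closedBall v (C * ρ ^ n) := by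
    intro n hn
    obtain ⟨s, hs, hYns⟩ := hYnval n hn
    refine ⟨s, hs, (Measure.support_map_subset_closure_range μ Y).trans
      (closure_minimal ?_ (isClosed_biUnion_finset fun v _ => isClosed_closedBall))⟩
    rintro _ ⟨ω, rfl⟩
    exact mem_biUnion (hYns ω) (by rw [mem_closedBall, Real.dist_eq]; exact happrox n hn ω)
  have hnull := volume_eq_zero_of_forall_subset_biUnion_closedBall hC.le hρ.1.le hρ.2 hcover
  exact ⟨hnull, Measure.mutuallySingular_of_measure_support_eq_zero hnull⟩

/-- If `Y` is uniformly approximated at geometric speed `C ρⁿ` by random variables `Y_n`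
taking at most `c·n` values, then the support of the law of `Y` is Lebesgue-null; in
particular the law of `Y` is singular with respect to Lebesgue measure. -/
theorem law_singular_of_geometric_approximation_by_simple
    {Ω : Type*} [MeasurableSpace Ω] (μ : Measure Ω) [IsProbabilityMeasure μ]
    (Y : Ω → ℝ) (hY : Measurable Y)
    (C c ρ : ℝ) (hC : 0 < C) (hc : 0 < c) (hρ : ρ ∈ Set.Ioo (0 : ℝ) 1)
    (Yn : ℕ → Ω → ℝ) (hYnmeas : ∀ n, Measurable (Yn n))
    (hYnval : ∀ n : ℕ, 1 ≤ n → ∃ s : Finset ℝ, (s.card : ℝ) ≤ c * n ∧ ∀ ω, Yn n ω ∈ s)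
    (happrox : ∀ n : ℕ, 1 ≤ n → ∀ ω : Ω, |Y ω - Yn n ω| ≤ C * ρ ^ n) :
    volume (msupport (μ.map Y)) = 0 ∧ μ.map Y ⟂ₘ volume :=
  law_singular_of_geometric_approximation_by_simple_general μ Y C c ρ hC hρ Yn hYnval happrox
end

section
/- Suppose the map i↦fix(ψ_i), from the set ℳ of minimal multi-indices to ℝ, is injective. Then either P_X is continuous (has no atoms), or there exist N≥1 and (i₀,…,i_{N−1})∈𝒮^N such that for P-a.e. ω the sequence (ε(T^nω))_{n≥0} is a left shift of the periodic sequence (i₀,…,i_{N−1},i₀,…,i_{N−1},…); in the latter case, up to a P-null set, X takes only the values ψ_{i_k}∘⋯∘ψ_{i_{N−1}}(c) for 0≤k<N, where c=fix(ψ_{i₀}∘⋯∘ψ_{i_{N−1}}). -/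
/-!
If `P_X` has an atom `a`, Poincaré recurrence makes almost every point of `{X = a}` return to
`{X = a}`. Splitting these points by the return time and the word read until the return, a piece
of positive measure yields a word fixing `a`, whose shortest prefix with fixed point `a` is minimal.
By injectivity this minimal word `w` is the same for a.e. point of `{X = a}`, and after reading `w`
the orbit is back in `{X = a}`, so the coding there is `w w w ⋯`. The points whose coding is a
shift of `w w w ⋯` form a forward invariant set of positive measure, hence of full measure by
ergodicity, and on it `X` is the sum of an eventually periodic series:
`X = ψ_{w.drop k} (fix ψ_w)`.
-/

open MeasureTheory Filter Topology

/-- The affine map `ψ_{i₀} ∘ ⋯ ∘ ψ_{i_{n−1}}` associated with a multi-index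
`l = [i₀,…,i_{n−1}]`, represented as a pair `(B, R)` meaning `y ↦ B + R y`, where
`ψ_j(y) = br j + rr j · y`. -/
def affOfList {S : Type*} (br rr : S → ℝ) : List S → ℝ × ℝ
  | [] => (0, 1)
  | j :: l => (br j + rr j * (affOfList br rr l).1, rr j * (affOfList br rr l).2)

/-- The fixed point of the affine contraction `ψ_l` associated with a nonempty
multi-index `l`. -/
noncomputable def affFix {S : Type*} (br rr : S → ℝ) (l : List S) : ℝ :=
  (affOfList br rr l).1 / (1 - (affOfList br rr l).2)

/-- A multi-index `l ∈ 𝒮ⁿ` (`n ≥ 1`) is minimal if it occurs with positive probability and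
no nonempty strict prefix of `l` has the same fixed point as `l`. -/
def IsMinimal {Ω S : Type*} [MeasurableSpace Ω] (P : Measure Ω) (T : Ω → Ω)
    (ε : Ω → S) (br rr : S → ℝ) (l : List S) : Prop :=
  l ≠ [] ∧
  0 < P {ω | ∀ k : Fin l.length, ε (T^[(k : ℕ)] ω) = l.get k} ∧
  ∀ m : ℕ, 1 ≤ m → m < l.length → affFix br rr (l.take m) ≠ affFix br rr l

open Function

section AffineWords

variable {S : Type*} {br rr : S → ℝ}

def affMap (br rr : S → ℝ) (l : List S) (y : ℝ) : ℝ :=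
  (affOfList br rr l).1 + (affOfList br rr l).2 * y

@[simp] lemma affMap_nil (y : ℝ) : affMap br rr [] y = y := by
  simp [affMap, affOfList]

lemma affMap_cons (j : S) (l : List S) (y : ℝ) :
    affMap br rr (j :: l) y = br j + rr j * affMap br rr l y := by
  simp only [affMap, affOfList]
  ring

lemma affMap_append (u v : List S) (y : ℝ) :
    affMap br rr (u ++ v) y = affMap br rr u (affMap br rr v y) := by
  induction u with
  | nil => simp
  | cons j u ih => simp only [List.cons_append, affMap_cons, ih]

lemma affOfList_snd_pos (hr : ∀ j, 0 < rr j) (l : List S) : 0 < (affOfList br rr l).2 := by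
  induction l with
  | nil => simp [affOfList]
  | cons j l ih => exact mul_pos (hr j) ih

lemma affOfList_snd_mem_Icc (hr : ∀ j, rr j ∈ Set.Icc 0 1) (l : List S) :
    (affOfList br rr l).2 ∈ Set.Icc 0 1 := by
  induction l with
  | nil => simp [affOfList]
  | cons j l ih => exact ⟨mul_nonneg (hr j).1 ih.1, mul_le_one₀ (hr j).2 ih.1 ih.2⟩

lemma affOfList_snd_lt_one (hr : ∀ j, rr j ∈ Set.Ico 0 1) {l : List S} (hl : l ≠ []) :
    (affOfList br rr l).2 < 1 := by
  obtain ⟨j, l, rfl⟩ := List.exists_cons_of_ne_nil hl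
  exact mul_lt_one_of_nonneg_of_lt_one_left (hr j).1 (hr j).2
    (affOfList_snd_mem_Icc (fun i => Set.Ico_subset_Icc_self (hr i)) l).2

lemma affMap_injective {l : List S} (hl : (affOfList br rr l).2 ≠ 0) :
    Injective (affMap br rr l) := fun _ _ h => by
  simpa [affMap, hl] using h

lemma eq_affFix_iff {l : List S} (hl : (affOfList br rr l).2 ≠ 1) {y : ℝ} :
    y = affFix br rr l ↔ affMap br rr l y = y := by
  rw [affFix, eq_div_iff (sub_ne_zero.2 hl.symm), affMap]
  constructor <;> intro h <;> linarith

end AffineWords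

section AffineSeries

variable {S : Type*} {br rr : S → ℝ}

/-- The series whose sum is `X ω` when `s` is the coding sequence of `ω`. -/
def affSeries (br rr : S → ℝ) (s : ℕ → S) (n : ℕ) : ℝ :=
  (∏ k ∈ Finset.range n, rr (s k)) * br (s n)

lemma eq_affMap_of_hasSum_affSeries {s : ℕ → S} {x y : ℝ} (hx : HasSum (affSeries br rr s) x)
    (hy : HasSum (affSeries br rr fun n => s (n + 1)) y) : x = affMap br rr [s 0] y := by
  have hshift : HasSum (fun n => affSeries br rr s (n + 1)) (x - br (s 0)) := by
    simpa [affSeries] using (hasSum_nat_add_iff' 1).2 hx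
  have hterm : (fun n => affSeries br rr s (n + 1)) =
      fun n => rr (s 0) * affSeries br rr (fun n => s (n + 1)) n := by
    ext n
    simp only [affSeries, Finset.prod_range_succ']
    ring
  have hy' : HasSum (fun n => affSeries br rr s (n + 1)) (rr (s 0) * y) :=
    hterm ▸ hy.mul_left (rr (s 0))
  simp only [affMap_cons, affMap_nil]
  linarith [hshift.unique hy']

lemma eq_affMap_range_of_hasSum {s : ℕ → S} {x : ℕ → ℝ}
    (h : ∀ m, HasSum (affSeries br rr fun n => s (n + m)) (x m)) (n : ℕ) :
    x 0 = affMap br rr ((List.range n).map s) (x n) := by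
  induction n with
  | zero => simp
  | succ n ih =>
    have hstep : x n = affMap br rr [s n] (x (n + 1)) := by
      have h' : HasSum (affSeries br rr fun k => s (k + 1 + n)) (x (n + 1)) := by
        simpa only [add_right_comm _ 1 n, add_assoc] using h (n + 1)
      simpa using eq_affMap_of_hasSum_affSeries (h n) h'
    rw [ih, hstep, List.range_succ, List.map_append, affMap_append, List.map_singleton]

end AffineSeries

section Itinerary

variable {Ω S : Type*}

def itinerary (T : Ω → Ω) (ε : Ω → S) (ω : Ω) (n : ℕ) : S := ε (T^[n] ω)

lemma itinerary_iterate (T : Ω → Ω) (ε : Ω → S) (ω : Ω) (m : ℕ) :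
    itinerary T ε (T^[m] ω) = fun n => itinerary T ε ω (n + m) := by
  ext n
  simp [itinerary, iterate_add_apply]

lemma map_range_length_eq_iff {s : ℕ → S} {l : List S} :
    (List.range l.length).map s = l ↔ ∀ k : Fin l.length, s k = l.get k := by
  simp [List.ext_get_iff, Fin.forall_iff]

lemma eq_affMap_itinerary_of_hasSum {T : Ω → Ω} {ε : Ω → S} {br rr : S → ℝ} {X : Ω → ℝ} {ω : Ω}
    (h : ∀ m, HasSum (affSeries br rr (itinerary T ε (T^[m] ω))) (X (T^[m] ω))) (n : ℕ) :
    X ω = affMap br rr ((List.range n).map (itinerary T ε ω)) (X (T^[n] ω)) := by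
  simp only [itinerary_iterate] at h
  simpa using eq_affMap_range_of_hasSum h n

/-- `s` is the periodic sequence `w w w ⋯` read from position `k`. -/
def FollowsCycle (w : List S) (k : ℕ) (s : ℕ → S) : Prop :=
  ∀ n, ∀ h : (k + n) % w.length < w.length, s n = w.get ⟨(k + n) % w.length, h⟩

namespace FollowsCycle

variable {w : List S} {k : ℕ} {s : ℕ → S}

lemma shift (hs : FollowsCycle w k s) (j : ℕ) : FollowsCycle w (k + j) fun n => s (n + j) := by
  intro n h
  refine (hs (n + j) (by rwa [add_comm n j, ← add_assoc])).trans ?_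
  congr 3
  ring

lemma mod (hs : FollowsCycle w k s) : FollowsCycle w (k % w.length) s := by
  intro n h
  rw [hs n (by rwa [Nat.mod_add_mod] at h)]
  simp only [Nat.mod_add_mod]

lemma eq_of_mod_eq (hw : w ≠ []) {k' : ℕ} {s' : ℕ → S} (hs : FollowsCycle w k s)
    (hs' : FollowsCycle w k' s') (hk : k % w.length = k' % w.length) : s = s' := by
  have hN := List.length_pos_iff.2 hw
  ext n
  rw [hs n (Nat.mod_lt _ hN), hs' n (Nat.mod_lt _ hN)]
  simp only [Nat.add_mod k, Nat.add_mod k', hk]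

lemma map_range_eq_drop (hs : FollowsCycle w k s) (hk : k < w.length) :
    (List.range (w.length - k)).map s = w.drop k := by
  refine List.ext_getElem (by simp) fun n h _ => ?_
  simp only [List.length_map, List.length_range] at h
  have hkn : k + n < w.length := by omega
  simp [hs n (by simpa [Nat.mod_eq_of_lt hkn] using hkn), Nat.mod_eq_of_lt hkn]

end FollowsCycle

end Itinerary

lemma MeasureTheory.MeasurePreserving.ae_forall_iterate {α : Type*} [MeasurableSpace α]
    {μ : Measure α} {f : α → α} (hf : MeasurePreserving f μ μ) {p : α → Prop}
    (h : ∀ᵐ x ∂μ, p x) : ∀ᵐ x ∂μ, ∀ m, p (f^[m] x) :=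
  ae_all_iff.2 fun m => (hf.iterate m).quasiMeasurePreserving.ae h

lemma ae_forall_mem_imp_measure_ne_zero {α ι : Type*} [MeasurableSpace α] [Countable ι]
    (μ : Measure α) (D : ι → Set α) : ∀ᵐ x ∂μ, ∀ i, x ∈ D i → μ (D i) ≠ 0 := by
  refine ae_all_iff.2 fun i => ?_
  by_cases h : μ (D i) = 0
  · filter_upwards [measure_eq_zero_iff_ae_notMem.1 h] with x hx hxi using absurd hxi hx
  · exact Eventually.of_forall fun _ _ => h

section MinimalWords

variable {Ω S : Type*} [MeasurableSpace Ω] {P : Measure Ω} {T : Ω → Ω} {ε : Ω → S}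
  {br rr : S → ℝ}

/-- The shortest nonempty prefix of `u` with the same fixed point as `u` is minimal. -/
lemma exists_isMinimal_take {u : List S} (hu : u ≠ [])
    (hP : P {ω | (List.range u.length).map (itinerary T ε ω) = u} ≠ 0) :
    ∃ m, IsMinimal P T ε br rr (u.take m) ∧ affFix br rr (u.take m) = affFix br rr u := by
  classical
  have hex : ∃ m, 1 ≤ m ∧ affFix br rr (u.take m) = affFix br rr u :=
    ⟨u.length, List.length_pos_iff.2 hu, by rw [List.take_length]⟩
  obtain ⟨m, ⟨hm1, hmfix⟩, hmin⟩ : ∃ m, (1 ≤ m ∧ affFix br rr (u.take m) = affFix br rr u) ∧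
      ∀ m' < m, ¬(1 ≤ m' ∧ affFix br rr (u.take m') = affFix br rr u) :=
    ⟨Nat.find hex, Nat.find_spec hex, fun _ => Nat.find_min hex⟩
  refine ⟨m, ⟨?_, ?_, fun m' hm'1 hm'2 => ?_⟩, hmfix⟩
  · simp [List.take_eq_nil_iff, hu]
    omega
  · refine pos_iff_ne_zero.2 fun h0 => hP (measure_mono_null (fun ω hω => ?_) h0)
    change ∀ k : Fin _, itinerary T ε ω k = _
    rw [← map_range_length_eq_iff, ← hω.out]
    simp [← List.map_take]
  · have hm' : m' < m := by
      rw [List.length_take] at hm'2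
      exact (lt_min_iff.1 hm'2).1
    rw [List.take_take, min_eq_left hm'.le, hmfix]
    exact fun h => hmin m' hm' ⟨hm'1, h⟩

end MinimalWords

section ReturnWords

variable {Ω S : Type*} [MeasurableSpace Ω] {P : Measure Ω} {T : Ω → Ω} {ε : Ω → S}
  {br rr : S → ℝ} {X : Ω → ℝ}

/-- Split the level set `{X = a}` according to a return time `n` and the word read until then:
a.e. point lies in a piece of positive measure, and the word of that piece is fixed by `a`. -/
lemma ae_exists_isMinimal_return_word [Countable S] (hT : Conservative T P) (hX : Measurable X)
    (hrr : ∀ j, rr j ∈ Set.Ico 0 1)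
    (hrec : ∀ᵐ ω ∂P, ∀ n, X ω = affMap br rr ((List.range n).map (itinerary T ε ω)) (X (T^[n] ω)))
    (a : ℝ) :
    ∀ᵐ ω ∂P, X ω = a → ∃ v, IsMinimal P T ε br rr v ∧ affFix br rr v = a ∧
      (List.range v.length).map (itinerary T ε ω) = v := by
  let D : ℕ × List S → Set Ω := fun p =>
    {ω | X ω = a ∧ (List.range p.1).map (itinerary T ε ω) = p.2 ∧ X (T^[p.1] ω) = a}
  filter_upwards
    [hT.ae_mem_imp_frequently_image_mem (hX (measurableSet_singleton a)).nullMeasurableSet,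
      ae_forall_mem_imp_measure_ne_zero P D, hrec] with ω hret hD hrecω hωa
  obtain ⟨n, hTn, hn⟩ := ((hret hωa).and_eventually (eventually_ge_atTop 1)).exists
  set u := (List.range n).map (itinerary T ε ω)
  have hlen : u.length = n := by simp [u]
  have hu : u ≠ [] := List.ne_nil_of_length_pos (by omega)
  have hPu : P {ω' | (List.range u.length).map (itinerary T ε ω') = u} ≠ 0 := fun h0 =>
    hD (n, u) ⟨hωa, rfl, hTn⟩ (measure_mono_null (fun ω' h => hlen ▸ h.2.1) h0)
  have hfix : affFix br rr u = a := by
    refine ((eq_affFix_iff (affOfList_snd_lt_one hrr hu).ne).2 ?_).symm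
    have h := hrecω n
    rwa [hωa, show X (T^[n] ω) = a from hTn, eq_comm] at h
  obtain ⟨m, hmin, hmfix⟩ := exists_isMinimal_take (br := br) (rr := rr) hu hPu
  refine ⟨u.take m, hmin, hmfix.trans hfix, ?_⟩
  simp [u, ← List.map_take]

lemma exists_return_word_of_measure_ne_zero [Countable S] [IsFiniteMeasure P]
    (hT : MeasurePreserving T P P) (hX : Measurable X) (hrr : ∀ j, rr j ∈ Set.Ioo 0 1)
    (hinj : Set.InjOn (affFix br rr) {l | IsMinimal P T ε br rr l})
    (hrec : ∀ᵐ ω ∂P, ∀ n, X ω = affMap br rr ((List.range n).map (itinerary T ε ω)) (X (T^[n] ω)))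
    {a : ℝ} (ha : P {ω | X ω = a} ≠ 0) :
    ∃ w : List S, w ≠ [] ∧ ∀ᵐ ω ∂P, X ω = a →
      (List.range w.length).map (itinerary T ε ω) = w ∧ X (T^[w.length] ω) = a := by
  have hrr' : ∀ j, rr j ∈ Set.Ico 0 1 := fun j => Set.Ioo_subset_Ico_self (hrr j)
  have hret := ae_exists_isMinimal_return_word hT.conservative hX hrr' hrec a
  obtain ⟨ω₀, hω₀a, hω₀⟩ :=
    Measure.exists_mem_of_measure_ne_zero_of_ae ha (ae_restrict_of_ae hret)
  obtain ⟨w, hw, hwa, -⟩ := hω₀ hω₀a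
  refine ⟨w, hw.1, ?_⟩
  filter_upwards [hret, hrec] with ω hω hrecω hωa
  obtain ⟨v, hv, hva, hvω⟩ := hω hωa
  obtain rfl : v = w := hinj hv hw (hva.trans hwa.symm)
  refine ⟨hvω, affMap_injective (br := br) (affOfList_snd_pos (fun j => (hrr j).1) v).ne' ?_⟩
  have h := hrecω v.length
  rw [hvω] at h
  rw [← h, hωa]
  exact ((eq_affFix_iff (affOfList_snd_lt_one hrr' hv.1).ne).1 hva.symm).symm

lemma ae_followsCycle_zero_of_ae_return (hT : MeasurePreserving T P P) {B : Set Ω} {w : List S}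
    (h : ∀ᵐ ω ∂P, ω ∈ B → (List.range w.length).map (itinerary T ε ω) = w ∧ T^[w.length] ω ∈ B) :
    ∀ᵐ ω ∂P, ω ∈ B → FollowsCycle w 0 (itinerary T ε ω) := by
  filter_upwards [hT.ae_forall_iterate h] with ω hω hωB
  have hblock : ∀ j, T^[j * w.length] ω ∈ B := by
    intro j
    induction j with
    | zero => simpa using hωB
    | succ j ih => simpa [add_mul, add_comm, iterate_add_apply] using (hω _ ih).2
  intro n hn
  have hword := map_range_length_eq_iff.1 (hω _ (hblock (n / w.length))).1
    ⟨n % w.length, by simpa using hn⟩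
  simpa [itinerary_iterate, Nat.mod_add_div'] using hword

lemma ae_exists_followsCycle_of_ergodic [IsFiniteMeasure P] [MeasurableSpace S]
    [MeasurableSingletonClass S] (hT : Ergodic T P) (hε : Measurable ε) {w : List S}
    (hw : w ≠ []) (h0 : P {ω | FollowsCycle w 0 (itinerary T ε ω)} ≠ 0) :
    ∀ᵐ ω ∂P, ∃ k < w.length, FollowsCycle w k (itinerary T ε ω) := by
  let A := {ω | ∃ k, FollowsCycle w k (itinerary T ε ω)}
  have hA : MeasurableSet A := by
    simp only [A, FollowsCycle, Set.ofPred_exists, Set.ofPred_forall]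
    refine .iUnion fun k => .iInter fun n => .iInter fun h => ?_
    exact hε.comp (hT.measurable.iterate n) (measurableSet_singleton _)
  have hAT : A ⊆ T ⁻¹' A := fun ω ⟨k, hk⟩ => ⟨k + 1, by
    change FollowsCycle w (k + 1) (itinerary T ε (T^[1] ω))
    rw [itinerary_iterate]
    exact hk.shift 1⟩
  have hApos : P A ≠ 0 := fun h => h0 (measure_mono_null (fun ω hω => ⟨0, hω⟩ : _ ⊆ A) h)
  rcases hT.ae_empty_or_univ_of_ae_le_preimage hA.nullMeasurableSet hAT.eventuallyLE with h | h
  · exact absurd (ae_eq_empty.1 h) hApos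
  · filter_upwards [ae_iff.2 (ae_eq_univ.1 h)] with ω hω
    obtain ⟨k, hk⟩ := hω
    exact ⟨k % w.length, Nat.mod_lt _ (List.length_pos_iff.2 hw), hk.mod⟩

end ReturnWords

section CycleValues

variable {Ω S : Type*} {T : Ω → Ω} {ε : Ω → S} {br rr : S → ℝ} {X : Ω → ℝ} {ω : Ω}
  {w : List S}

lemma eq_affFix_of_followsCycle_zero (hrr : ∀ j, rr j ∈ Set.Ico 0 1) (hw : w ≠ [])
    (hsum : ∀ m, HasSum (affSeries br rr (itinerary T ε (T^[m] ω))) (X (T^[m] ω)))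
    (hc : FollowsCycle w 0 (itinerary T ε ω)) : X ω = affFix br rr w := by
  have hper : itinerary T ε (T^[w.length] ω) = itinerary T ε ω := by
    rw [itinerary_iterate]
    exact (hc.shift w.length).eq_of_mod_eq hw hc (by simp)
  have hXper : X (T^[w.length] ω) = X ω := (hsum w.length).unique (by simpa [hper] using hsum 0)
  have hword : (List.range w.length).map (itinerary T ε ω) = w := by
    simpa using hc.map_range_eq_drop (List.length_pos_iff.2 hw)
  have h := eq_affMap_itinerary_of_hasSum hsum w.length
  rw [hXper, hword] at h
  exact (eq_affFix_iff (affOfList_snd_lt_one hrr hw).ne).2 h.symm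

lemma eq_affMap_drop_of_followsCycle (hrr : ∀ j, rr j ∈ Set.Ico 0 1) (hw : w ≠ [])
    (hsum : ∀ m, HasSum (affSeries br rr (itinerary T ε (T^[m] ω))) (X (T^[m] ω)))
    {k : ℕ} (hk : k < w.length) (hc : FollowsCycle w k (itinerary T ε ω)) :
    X ω = affMap br rr (w.drop k) (affFix br rr w) := by
  have hsum' : ∀ m, HasSum (affSeries br rr (itinerary T ε (T^[m] (T^[w.length - k] ω))))
      (X (T^[m] (T^[w.length - k] ω))) := fun m => by
    simpa only [← iterate_add_apply] using hsum (m + (w.length - k))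
  have hc' : FollowsCycle w 0 (itinerary T ε (T^[w.length - k] ω)) := by
    have h := (hc.shift (w.length - k)).mod
    rwa [Nat.add_sub_cancel' hk.le, Nat.mod_self, ← itinerary_iterate] at h
  rw [eq_affMap_itinerary_of_hasSum hsum (w.length - k), hc.map_range_eq_drop hk,
    eq_affFix_of_followsCycle_zero hrr hw hsum' hc']

end CycleValues

theorem continuous_law_or_periodic_coding_general
    {Ω : Type*} [MeasurableSpace Ω] (P : Measure Ω) [IsProbabilityMeasure P]
    (T : Ω ≃ᵐ Ω) (hT : Ergodic (⇑T) P)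
    {S : Type*} [Countable S] [MeasurableSpace S] [MeasurableSingletonClass S]
    (ε : Ω → S) (hε : Measurable ε)
    (br rr : S → ℝ) (hrr : ∀ j, rr j ∈ Set.Ioo (0 : ℝ) 1)
    (X : Ω → ℝ) (hX : Measurable X)
    (hXsum : ∀ᵐ ω ∂P, HasSum
      (fun n : ℕ => (∏ k ∈ Finset.range n, rr (ε ((⇑T)^[k] ω))) * br (ε ((⇑T)^[n] ω)))
      (X ω))
    (hinj : ∀ l l' : List S, IsMinimal P (⇑T) ε br rr l → IsMinimal P (⇑T) ε br rr l' →
      affFix br rr l = affFix br rr l' → l = l') :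
    (∀ a : ℝ, P.map X {a} = 0)
    ∨ ∃ w : List S, 1 ≤ w.length ∧
        (∀ᵐ ω ∂P, ∃ k < w.length,
          ∀ n : ℕ, ∀ h : (k + n) % w.length < w.length,
            ε ((⇑T)^[n] ω) = w.get ⟨(k + n) % w.length, h⟩) ∧
        (∀ᵐ ω ∂P, ∃ k < w.length,
          X ω = (affOfList br rr (w.drop k)).1
            + (affOfList br rr (w.drop k)).2 * affFix br rr w) := by
  by_cases hatom : ∀ a : ℝ, P.map X {a} = 0
  · exact Or.inl hatom
  right
  obtain ⟨a, ha⟩ := not_forall.1 hatom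
  rw [Measure.map_apply hX (measurableSet_singleton a)] at ha
  have hrr' : ∀ j, rr j ∈ Set.Ico 0 1 := fun j => Set.Ioo_subset_Ico_self (hrr j)
  have hmp := hT.toMeasurePreserving
  have hsum : ∀ᵐ ω ∂P, ∀ m,
      HasSum (affSeries br rr (itinerary T ε (T^[m] ω))) (X (T^[m] ω)) :=
    hmp.ae_forall_iterate hXsum
  obtain ⟨w, hw, hret⟩ := exists_return_word_of_measure_ne_zero hmp hX hrr
    (fun l hl l' hl' => hinj l l' hl hl') (hsum.mono fun _ => eq_affMap_itinerary_of_hasSum) ha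
  have hcyc0 := ae_followsCycle_zero_of_ae_return (B := {ω | X ω = a}) hmp hret
  have hcyc := ae_exists_followsCycle_of_ergodic hT hε hw fun h0 =>
    ha (measure_mono_null_ae hcyc0 h0)
  refine ⟨w, List.length_pos_iff.2 hw, hcyc, ?_⟩
  filter_upwards [hcyc, hsum] with ω ⟨k, hk, hc⟩ hω
  exact ⟨k, hk, eq_affMap_drop_of_followsCycle hrr' hw hω hk hc⟩

/-- If `minimal multi-index ↦ fixed point` is injective, then either `P_X` is continuous, or
the coding sequence `(ε(Tⁿω))_{n≥0}` is a.s. a left shift of a fixed periodic sequence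
`(i₀,…,i_{N−1})^∞`, in which case `X` takes, up to a null set, only the `N` values
`ψ_{i_k}∘⋯∘ψ_{i_{N−1}}(c)` with `c = fix(ψ_{i₀}∘⋯∘ψ_{i_{N−1}})`. -/
theorem continuous_law_or_periodic_coding
    {Ω : Type*} [MeasurableSpace Ω] (P : Measure Ω) [IsProbabilityMeasure P]
    (T : Ω ≃ᵐ Ω) (hT : Ergodic (⇑T) P)
    {S : Type*} [Countable S] [MeasurableSpace S] [MeasurableSingletonClass S]
    (ε : Ω → S) (hε : Measurable ε) (hpos : ∀ j : S, 0 < P {ω | ε ω = j})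
    (br rr : S → ℝ) (hrr : ∀ j, rr j ∈ Set.Ioo (0 : ℝ) 1)
    (hbInt : Integrable (fun ω => br (ε ω)) P)
    (hlogInt : Integrable (fun ω => Real.log (rr (ε ω))) P)
    (X : Ω → ℝ) (hX : Measurable X)
    (hXsum : ∀ᵐ ω ∂P, HasSum
      (fun n : ℕ => (∏ k ∈ Finset.range n, rr (ε ((⇑T)^[k] ω))) * br (ε ((⇑T)^[n] ω)))
      (X ω))
    (hinj : ∀ l l' : List S, IsMinimal P (⇑T) ε br rr l → IsMinimal P (⇑T) ε br rr l' →
      affFix br rr l = affFix br rr l' → l = l') :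
    (∀ a : ℝ, P.map X {a} = 0)
    ∨ ∃ w : List S, 1 ≤ w.length ∧
        (∀ᵐ ω ∂P, ∃ k < w.length,
          ∀ n : ℕ, ∀ h : (k + n) % w.length < w.length,
            ε ((⇑T)^[n] ω) = w.get ⟨(k + n) % w.length, h⟩) ∧
        (∀ᵐ ω ∂P, ∃ k < w.length,
          X ω = (affOfList br rr (w.drop k)).1
            + (affOfList br rr (w.drop k)).2 * affFix br rr w) :=
  continuous_law_or_periodic_coding_general P T hT ε hε br rr hrr X hX hXsum hinj
end

section
/- Let λ∈(0,1) be such that λ is not a root of any nonzero polynomial with coefficients in {−1,0,1}. Let 1≤n≤m, ε=(ε₀,…,ε_{n−1})∈{−1,1}ⁿ and δ=(δ₀,…,δ_{m−1})∈{−1,1}^m. If (1/(1−λⁿ))·∑_{k=0}^{n−1} λᵏ εₖ = (1/(1−λ^m))·∑_{k=0}^{m−1} λᵏ δₖ, then εₖ=δₖ for all 0≤k<n, i.e. ε is a prefix of δ; in particular, if in addition no strict prefix of δ yields the same value, then n=m and ε=δ. -/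
private lemma aux_sum_lt (N K : ℕ) (hK : K ≤ N) (f : ℕ → ℝ) :
    ∑ j ∈ Finset.range N, (if j < K then f j else 0) = ∑ j ∈ Finset.range K, f j := by
  rw [← Finset.sum_subset (Finset.range_subset_range.mpr hK)]
  · exact Finset.sum_congr rfl fun x hx => by
      simp [Finset.mem_range.mp hx]
  · intro x hx hx'
    simp only [Finset.mem_range] at hx hx'
    simp [if_neg (by omega : ¬ x < K)]

private lemma aux_sum_ge (N K : ℕ) (hK : K ≤ N) (f : ℕ → ℝ) :
    ∑ j ∈ Finset.range N, (if K ≤ j then f j else 0)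
      = ∑ j ∈ Finset.range (N - K), f (K + j) := by
  have h1 : Finset.range N = Finset.Ico 0 N := by rw [Finset.range_eq_Ico]
  rw [h1, ← Finset.sum_Ico_consecutive _ (Nat.zero_le K) hK]
  have h2 : ∑ j ∈ Finset.Ico 0 K, (if K ≤ j then f j else 0) = 0 := by
    apply Finset.sum_eq_zero
    intro x hx
    simp only [Finset.mem_Ico] at hx
    simp [if_neg (by omega : ¬ K ≤ x)]
  rw [h2, zero_add, Finset.sum_Ico_eq_sum_range]
  apply Finset.sum_congr rfl
  intro x hx
  simp only [Finset.mem_range] at hx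
  rw [if_pos (by omega : K ≤ K + x)]

private lemma half_mul (x y : ℤ) (hx : x = 1 ∨ x = -1) (hy : y = 1 ∨ y = -1) :
    2 * ((x - y) / 2) = x - y := by
  rcases hx with rfl | rfl <;> rcases hy with rfl | rfl <;> decide

private lemma half_mem (x y : ℤ) (hx : x = 1 ∨ x = -1) (hy : y = 1 ∨ y = -1) :
    (x - y) / 2 ∈ ({-1, 0, 1} : Set ℤ) := by
  rcases hx with rfl | rfl <;> rcases hy with rfl | rfl <;> simp

/-- If `λ ∈ (0,1)` is not a root of any nonzero polynomial with coefficients in `{−1,0,1}`,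
and two `±1`-words `ε ∈ {−1,1}ⁿ`, `δ ∈ {−1,1}^m` (`1 ≤ n ≤ m`) give the same fixed point
`(1/(1−λⁿ))·∑_{k<n} λᵏ εₖ = (1/(1−λ^m))·∑_{k<m} λᵏ δₖ`, then `ε` is a prefix of `δ`;
if moreover no nonempty strict prefix of `δ` yields the same value, then `n = m`. -/
theorem prefix_of_equal_fixed_points
    (lam : ℝ) (hlam : lam ∈ Set.Ioo (0 : ℝ) 1)
    (hroot : ∀ p : Polynomial ℤ, p ≠ 0 → (∀ k : ℕ, p.coeff k ∈ ({-1, 0, 1} : Set ℤ)) →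
      Polynomial.aeval lam p ≠ 0)
    (n m : ℕ) (hn : 1 ≤ n) (hnm : n ≤ m)
    (ε δ : ℕ → ℝ)
    (hε : ∀ k < n, ε k = 1 ∨ ε k = -1) (hδ : ∀ k < m, δ k = 1 ∨ δ k = -1)
    (heq : (1 / (1 - lam ^ n)) * ∑ k ∈ Finset.range n, lam ^ k * ε k
      = (1 / (1 - lam ^ m)) * ∑ k ∈ Finset.range m, lam ^ k * δ k) :
    (∀ k < n, ε k = δ k) ∧
    ((∀ m' : ℕ, 1 ≤ m' → m' < m →
        (1 / (1 - lam ^ m')) * ∑ k ∈ Finset.range m', lam ^ k * δ k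
          ≠ (1 / (1 - lam ^ m)) * ∑ k ∈ Finset.range m, lam ^ k * δ k) →
      n = m) := by
  obtain ⟨hl0, hl1⟩ := hlam
  have hm : 1 ≤ m := le_trans hn hnm
  have hpowlt : ∀ k : ℕ, 1 ≤ k → lam ^ k < 1 := fun k hk =>
    pow_lt_one₀ (le_of_lt hl0) hl1 (by omega)
  have hne_n : (1 : ℝ) - lam ^ n ≠ 0 := by
    have := hpowlt n hn; intro h; nlinarith
  have hne_m : (1 : ℝ) - lam ^ m ≠ 0 := by
    have := hpowlt m hm; intro h; nlinarith
  -- cross-multiplied equation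
  have hcross : (∑ k ∈ Finset.range n, lam ^ k * ε k) * (1 - lam ^ m)
      = (∑ k ∈ Finset.range m, lam ^ k * δ k) * (1 - lam ^ n) := by
    field_simp at heq
    linarith
  -- integer codes for the digits
  set E : ℕ → ℤ := fun k => if ε k = 1 then 1 else -1 with hE
  set D : ℕ → ℤ := fun k => if δ k = 1 then 1 else -1 with hD
  have hEpm : ∀ k, E k = 1 ∨ E k = -1 := by
    intro k; by_cases h : ε k = 1 <;> simp [hE, h]
  have hDpm : ∀ k, D k = 1 ∨ D k = -1 := by
    intro k; by_cases h : δ k = 1 <;> simp [hD, h]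
  have hEval : ∀ k < n, (E k : ℝ) = ε k := by
    intro k hk
    rcases hε k hk with h | h <;> simp [hE, h] <;> norm_num [h]
  have hDval : ∀ k < m, (D k : ℝ) = δ k := by
    intro k hk
    rcases hδ k hk with h | h <;> simp [hD, h] <;> norm_num [h]
  -- coefficients of the difference polynomial
  set a : ℕ → ℤ := fun j =>
    if j < n then (E j - D j) / 2
    else if j < m then (D (j - n) - D j) / 2
    else if j < m + n then (D (j - n) - E (j - m)) / 2
    else 0 with ha
  set Q : Polynomial ℤ := ∑ j ∈ Finset.range (m + n), Polynomial.monomial j (a j) with hQ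
  have hcoeff : ∀ k, Q.coeff k = if k < m + n then a k else 0 := by
    intro k
    rw [hQ, Polynomial.finset_sum_coeff]
    simp only [Polynomial.coeff_monomial]
    rw [Finset.sum_ite_eq' (Finset.range (m + n)) k a]
    simp [Finset.mem_range]
  have hmem : ∀ k, Q.coeff k ∈ ({-1, 0, 1} : Set ℤ) := by
    intro k
    rw [hcoeff k]
    by_cases h1 : k < m + n
    · rw [if_pos h1]; simp only [ha]
      by_cases h2 : k < n
      · rw [if_pos h2]; exact half_mem _ _ (hEpm k) (hDpm k)
      · rw [if_neg h2]
        by_cases h3 : k < m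
        · rw [if_pos h3]; exact half_mem _ _ (hDpm _) (hDpm _)
        · rw [if_neg h3, if_pos h1]; exact half_mem _ _ (hDpm _) (hEpm _)
    · rw [if_neg h1]; simp
  -- key pointwise identity for the doubled coefficients
  have hpoint : ∀ j ∈ Finset.range (m + n),
      (2 * a j : ℝ) * lam ^ j =
        (if j < n then lam ^ j * ε j else 0)
        - (if j < m then lam ^ j * δ j else 0)
        - (if m ≤ j then lam ^ j * ε (j - m) else 0)
        + (if n ≤ j then lam ^ j * δ (j - n) else 0) := by
    intro j hj
    rw [Finset.mem_range] at hj
    by_cases h1 : j < n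
    · have h2 : j < m := by omega
      rw [if_pos h1, if_pos h2, if_neg (by omega : ¬ m ≤ j), if_neg (by omega : ¬ n ≤ j)]
      have hval : (2 * a j : ℤ) = E j - D j := by
        simp only [ha]; simp only [if_pos h1]
        exact half_mul _ _ (hEpm j) (hDpm j)
      have : ((2 * a j : ℤ) : ℝ) = ε j - δ j := by
        rw [hval]; push_cast; rw [hEval j h1, hDval j h2]
      push_cast at this ⊢
      rw [this]; ring
    · by_cases h2 : j < m
      · rw [if_neg h1, if_pos h2, if_neg (by omega : ¬ m ≤ j), if_pos (by omega : n ≤ j)]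
        have hval : (2 * a j : ℤ) = D (j - n) - D j := by
          simp only [ha]; simp only [if_neg h1, if_pos h2]
          exact half_mul _ _ (hDpm _) (hDpm _)
        have : ((2 * a j : ℤ) : ℝ) = δ (j - n) - δ j := by
          rw [hval]; push_cast; rw [hDval _ (by omega), hDval j h2]
        push_cast at this ⊢
        rw [this]; ring
      · rw [if_neg h1, if_neg h2, if_pos (by omega : m ≤ j), if_pos (by omega : n ≤ j)]
        have hval : (2 * a j : ℤ) = D (j - n) - E (j - m) := by
          simp only [ha]; simp only [if_neg h1, if_neg h2, if_pos hj]
          exact half_mul _ _ (hDpm _) (hEpm _)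
        have : ((2 * a j : ℤ) : ℝ) = δ (j - n) - ε (j - m) := by
          rw [hval]; push_cast; rw [hDval _ (by omega), hEval _ (by omega)]
        push_cast at this ⊢
        rw [this]; ring
  -- sum of doubled coefficients equals the cross-multiplied difference
  have hsum2 : ∑ j ∈ Finset.range (m + n), (2 * a j : ℝ) * lam ^ j = 0 := by
    rw [Finset.sum_congr rfl hpoint]
    have hs1 := aux_sum_lt (m + n) n (by omega) (fun j => lam ^ j * ε j)
    have hs2 := aux_sum_lt (m + n) m (by omega) (fun j => lam ^ j * δ j)
    have hs3 := aux_sum_ge (m + n) m (by omega) (fun j => lam ^ j * ε (j - m))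
    have hs4 := aux_sum_ge (m + n) n (by omega) (fun j => lam ^ j * δ (j - n))
    simp only [Finset.sum_add_distrib, Finset.sum_sub_distrib]
    rw [hs1, hs2, hs3, hs4]
    have e3 : ∑ j ∈ Finset.range (m + n - m), lam ^ (m + j) * ε (m + j - m)
        = lam ^ m * ∑ k ∈ Finset.range n, lam ^ k * ε k := by
      rw [Finset.mul_sum]
      rw [(by omega : m + n - m = n)]
      apply Finset.sum_congr rfl
      intro x _
      rw [Nat.add_sub_cancel_left, pow_add]
      ring
    have e4 : ∑ j ∈ Finset.range (m + n - n), lam ^ (n + j) * δ (n + j - n)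
        = lam ^ n * ∑ k ∈ Finset.range m, lam ^ k * δ k := by
      rw [Finset.mul_sum]
      rw [(by omega : m + n - n = m)]
      apply Finset.sum_congr rfl
      intro x _
      rw [Nat.add_sub_cancel_left, pow_add]
      ring
    rw [e3, e4]
    nlinarith [hcross]
  -- the polynomial vanishes at lam
  have haeval : Polynomial.aeval lam Q = 0 := by
    rw [hQ, map_sum]
    have : ∀ j ∈ Finset.range (m + n),
        Polynomial.aeval lam (Polynomial.monomial j (a j)) = (a j : ℝ) * lam ^ j := by
      intro j _
      simp [Polynomial.aeval_monomial]
    rw [Finset.sum_congr rfl this]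
    have h2 : (2 : ℝ) * ∑ j ∈ Finset.range (m + n), (a j : ℝ) * lam ^ j = 0 := by
      rw [Finset.mul_sum]
      rw [← hsum2]
      apply Finset.sum_congr rfl
      intro x _
      push_cast
      ring
    linarith
  -- hence it is the zero polynomial
  have hQ0 : Q = 0 := by
    by_contra h
    exact hroot Q h hmem haeval
  have hazero : ∀ j, j < m + n → a j = 0 := by
    intro j hj
    have := hcoeff j
    rw [hQ0] at this
    simp only [Polynomial.coeff_zero] at this
    rw [if_pos hj] at this
    exact this.symm
  -- prefix property
  have hpref : ∀ k < n, ε k = δ k := by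
    intro k hk
    have hak : a k = 0 := hazero k (by omega)
    have : (E k - D k) / 2 = 0 := by
      simp only [ha] at hak; simpa [if_pos hk] using hak
    have hED : E k = D k := by
      have := half_mul (E k) (D k) (hEpm k) (hDpm k)
      omega
    have := hEval k hk
    rw [hED, hDval k (by omega)] at this
    exact this.symm
  refine ⟨hpref, ?_⟩
  intro hmin
  by_contra hne
  have hlt : n < m := lt_of_le_of_ne hnm hne
  apply hmin n hn hlt
  have hss : ∑ k ∈ Finset.range n, lam ^ k * δ k = ∑ k ∈ Finset.range n, lam ^ k * ε k := by
    apply Finset.sum_congr rfl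
    intro k hk
    rw [hpref k (Finset.mem_range.mp hk)]
  rw [hss]
  exact heq
end
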